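/- arXiv:1905.07592 — 4 statements merged into one kernel-verified Lean document; each statement's English description precedes it below -/
import Mathlib

section
/- Let λ ∈ ℂ \ {0} and set α := Re(1/λ). There exist positive constants P and Q (depending on α) such that P/n^α ≤ ∏_{k=1}^n |1 - 1/(kλ)| ≤ Q/n^α for all positive integers n. -/
/-!
With `μ = 1/λ`, each factor is `1 - μ/k = (k - μ)/k`, so `n^μ ∏_{k ≤ n} (1 - μ/k)` is, up to the
factor `n/(n + 1 - μ) → 1`, the reciprocal of Gauss's sequence `n^(1-μ) n! / ∏_{j ≤ n} (1 - μ + j)`,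
which tends to `Γ(1 - μ) ≠ 0`. Taking norms, `n^α ∏ |1 - μ/k|` converges to `1/|Γ(1 - μ)| > 0`,
and a positive sequence with a positive limit is bounded above and away from zero.
-/

open Filter Finset Topology Nat

namespace Complex

theorem prod_Icc_one_sub_div_natCast (μ : ℂ) (n : ℕ) :
    ∏ k ∈ Icc 1 n, (1 - μ / k) = (∏ j ∈ range n, (1 - μ + j)) / n ! := by
  induction n with
  | zero => simp
  | succ n ih =>
    rw [prod_Icc_succ_top (Nat.le_add_left 1 n), ih, prod_range_succ, factorial_succ]
    push_cast
    field_simp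
    ring

theorem GammaSeq_one_sub_mul_cpow_mul_prod {μ : ℂ} (hμ : ∀ m : ℕ, μ ≠ m + 1) {n : ℕ}
    (hn : n ≠ 0) :
    GammaSeq (1 - μ) n * ((n : ℂ) ^ μ * ∏ k ∈ Icc 1 n, (1 - μ / k)) = n / (n + (1 - μ)) := by
  have hfactor : ∀ j : ℕ, 1 - μ + j ≠ 0 := fun j h => hμ j (by linear_combination -h)
  have hprod : ∏ j ∈ range n, (1 - μ + j) ≠ 0 := prod_ne_zero_iff.2 fun j _ => hfactor j
  have hcpow : (n : ℂ) ^ (1 - μ) * (n : ℂ) ^ μ = n := by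
    rw [← cpow_add _ _ (Nat.cast_ne_zero.2 hn), sub_add_cancel, cpow_one]
  rw [GammaSeq, prod_range_succ, prod_Icc_one_sub_div_natCast]
  have hfact : (n ! : ℂ) ≠ 0 := Nat.cast_ne_zero.2 n.factorial_ne_zero
  field_simp
  rw [hcpow, add_comm (n : ℂ)]

theorem Gamma_one_sub_ne_zero {μ : ℂ} (hμ : ∀ m : ℕ, μ ≠ m + 1) : Gamma (1 - μ) ≠ 0 :=
  Gamma_ne_zero fun m h => hμ m (by linear_combination -h)

theorem tendsto_cpow_mul_prod_one_sub_div {μ : ℂ} (hμ : ∀ m : ℕ, μ ≠ m + 1) :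
    Tendsto (fun n : ℕ => (n : ℂ) ^ μ * ∏ k ∈ Icc 1 n, (1 - μ / k)) atTop
      (𝓝 (Gamma (1 - μ))⁻¹) := by
  have hΓ := Gamma_one_sub_ne_zero hμ
  have hGammaSeq := GammaSeq_tendsto_Gamma (1 - μ)
  have h := (tendsto_natCast_div_add_atTop (1 - μ)).div hGammaSeq hΓ
  rw [one_div] at h
  refine h.congr' ?_
  filter_upwards [eventually_ne_atTop 0, hGammaSeq.eventually_ne hΓ] with n hn hGn
  rw [Pi.div_apply, ← GammaSeq_one_sub_mul_cpow_mul_prod hμ hn, mul_div_cancel_left₀ _ hGn]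

theorem tendsto_rpow_mul_prod_norm_one_sub_div {μ : ℂ} (hμ : ∀ m : ℕ, μ ≠ m + 1) :
    Tendsto (fun n : ℕ => (n : ℝ) ^ μ.re * ∏ k ∈ Icc 1 n, ‖1 - μ / k‖) atTop
      (𝓝 ‖Gamma (1 - μ)‖⁻¹) := by
  rw [← norm_inv]
  refine (tendsto_cpow_mul_prod_one_sub_div hμ).norm.congr' ?_
  filter_upwards [eventually_ne_atTop 0] with n hn
  rw [norm_mul, norm_prod, ← norm_cpow_eq_rpow_re_of_pos (by positivity), ofReal_natCast]

theorem prod_norm_one_sub_div_pos {μ : ℂ} (hμ : ∀ m : ℕ, μ ≠ m + 1) (n : ℕ) :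
    0 < ∏ k ∈ Icc 1 n, ‖1 - μ / k‖ := by
  refine prod_pos fun k hk => norm_pos_iff.2 fun h => ?_
  obtain ⟨m, rfl⟩ := Nat.exists_eq_add_of_le' (mem_Icc.1 hk).1
  have hk0 : ((m + 1 : ℕ) : ℂ) ≠ 0 := Nat.cast_ne_zero.2 (succ_ne_zero m)
  exact hμ m (by push_cast at h hk0 ⊢; field_simp at h; linear_combination -h)

end Complex

theorem Filter.Tendsto.exists_pos_bounds {f : ℕ → ℝ} {L : ℝ} (hf : Tendsto f atTop (𝓝 L))
    (hL : 0 < L) {s : Set ℕ} (hpos : ∀ n ∈ s, 0 < f n) :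
    ∃ P Q : ℝ, 0 < P ∧ 0 < Q ∧ ∀ n ∈ s, P ≤ f n ∧ f n ≤ Q := by
  obtain ⟨Q, hQ⟩ := hf.bddAbove_range
  obtain ⟨R, hR⟩ := (hf.inv₀ hL.ne').bddAbove_range
  refine ⟨(max R 1)⁻¹, max Q 1, by positivity, by positivity, fun n hn => ⟨?_, ?_⟩⟩
  · rw [inv_le_comm₀ (by positivity) (hpos n hn)]
    exact (hR ⟨n, rfl⟩).trans (le_max_left R 1)
  · exact (hQ ⟨n, rfl⟩).trans (le_max_left Q 1)

theorem prod_abs_one_sub_inv_bounds_general (lam : ℂ)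
    (hlam' : ∀ k : ℕ, 1 ≤ k → lam ≠ 1 / (k : ℂ)) :
    ∃ P Q : ℝ, 0 < P ∧ 0 < Q ∧ ∀ n : ℕ, 1 ≤ n →
      P / (n : ℝ) ^ ((1 / lam).re) ≤
        (∏ k ∈ Finset.Icc 1 n, ‖(1 - 1 / (k * lam) : ℂ)‖) ∧
      (∏ k ∈ Finset.Icc 1 n, ‖(1 - 1 / (k * lam) : ℂ)‖) ≤
        Q / (n : ℝ) ^ ((1 / lam).re) := by
  set μ := 1 / lam with hμ_def
  have hμ : ∀ m : ℕ, μ ≠ m + 1 := fun m h =>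
    hlam' (m + 1) (by omega) (by rw [← one_div_one_div lam, ← hμ_def, h, Nat.cast_succ])
  have hfactor : ∀ k : ℕ, (1 - 1 / (k * lam) : ℂ) = 1 - μ / k := fun k => by ring
  obtain ⟨P, Q, hP, hQ, hbounds⟩ :=
    (Complex.tendsto_rpow_mul_prod_norm_one_sub_div hμ).exists_pos_bounds
      (inv_pos.2 (norm_pos_iff.2 (Complex.Gamma_one_sub_ne_zero hμ))) (s := Set.Ici 1)
      fun n hn => mul_pos (Real.rpow_pos_of_pos (by exact_mod_cast hn) _)
        (Complex.prod_norm_one_sub_div_pos hμ n)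
  refine ⟨P, Q, hP, hQ, fun n hn => ?_⟩
  have hpow : 0 < (n : ℝ) ^ μ.re := by positivity
  simp only [hfactor, div_le_iff₀ hpow, le_div_iff₀ hpow, mul_comm _ ((n : ℝ) ^ μ.re)]
  exact hbounds n hn

/-- For `λ ≠ 0` with `λ ∉ {1/k : k ≥ 1}` and `α := Re(1/λ)`, there exist positive
constants `P`, `Q` with `P/n^α ≤ ∏_{k=1}^n |1 - 1/(kλ)| ≤ Q/n^α` for all `n ≥ 1`. -/
theorem prod_abs_one_sub_inv_bounds (lam : ℂ) (hlam : lam ≠ 0)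
    (hlam' : ∀ k : ℕ, 1 ≤ k → lam ≠ 1 / (k : ℂ)) :
    ∃ P Q : ℝ, 0 < P ∧ 0 < Q ∧ ∀ n : ℕ, 1 ≤ n →
      P / (n : ℝ) ^ ((1 / lam).re) ≤
        (∏ k ∈ Finset.Icc 1 n, ‖(1 - 1 / (k * lam) : ℂ)‖) ∧
      (∏ k ∈ Finset.Icc 1 n, ‖(1 - 1 / (k * lam) : ℂ)‖) ≤
        Q / (n : ℝ) ^ ((1 / lam).re) :=
  prod_abs_one_sub_inv_bounds_general lam hlam'
end

section
/- Let 1 < p < ∞ and α < 1/p' where 1/p + 1/p' = 1 (so (1-α)p > 1). Then the operator G defined by (G x)_n = (1/n^{1-α}) ∑_{m=1}^n x_m / m^α is bounded from ℓ^p to ℓ^p. -/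
/-!
Put `b_m = ‖x_m‖` and split `b_m m^(-α) = (b_m m^ε) · m^(-(α+ε))` with `ε > 0` so small that
`β = (α + ε) p' < 1`. Hölder's inequality together with `∑_{m ≤ n} m^(-β) ≲ n^(1-β)` gives
`(G b)_n^p ≲ n^(-(1+εp)) ∑_{m ≤ n} m^(εp) b_m^p`. Summing over `n` and exchanging the order of
summation, the tail bound `∑_{n ≥ m} n^(-(1+εp)) ≲ m^(-εp)` cancels the weight `m^(εp)`.
The estimates are carried out in `ℝ≥0∞`, where exchanging sums needs no summability argument.
-/

open Finset
open scoped ENNReal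

lemma sum_Ioc_rpow_neg_le {s : ℝ} (hs : 0 ≤ s) (hs1 : s ≠ 1) {a b : ℕ} (ha : 1 ≤ a) (hab : a ≤ b) :
    ∑ k ∈ Ioc a b, (k : ℝ) ^ (-s) ≤ ((b : ℝ) ^ (1 - s) - (a : ℝ) ^ (1 - s)) / (1 - s) := by
  have hanti : AntitoneOn (fun x : ℝ => x ^ (-s)) (Set.Icc (a : ℝ) b) := fun x hx y _ hxy =>
    Real.rpow_le_rpow_of_nonpos (by linarith [hx.1, (Nat.one_le_cast.2 ha : (1 : ℝ) ≤ a)]) hxy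
      (by linarith)
  have h0 : (0 : ℝ) ∉ Set.uIcc (a : ℝ) b := by
    rw [Set.uIcc_of_le (by exact_mod_cast hab)]
    exact fun h => by linarith [h.1, (Nat.one_le_cast.2 ha : (1 : ℝ) ≤ a)]
  calc ∑ k ∈ Ioc a b, (k : ℝ) ^ (-s) = ∑ k ∈ Ico a b, ((k + 1 : ℕ) : ℝ) ^ (-s) := by
        rw [← Ico_add_one_add_one_eq_Ioc, ← sum_Ico_add']
    _ ≤ ∫ x in (a : ℝ)..b, x ^ (-s) := hanti.sum_le_integral_Ico hab
    _ = _ := by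
        rw [integral_rpow (Or.inr ⟨by contrapose! hs1; linarith, h0⟩), neg_add_eq_sub]

lemma sum_Icc_one_rpow_neg_le {β : ℝ} (hβ : β < 1) (n : ℕ) :
    ∑ m ∈ Icc 1 n, (m : ℝ) ^ (-β) ≤ (1 + 1 / (1 - β)) * (n : ℝ) ^ (1 - β) := by
  rcases Nat.eq_zero_or_pos n with rfl | hn
  · simp [Real.zero_rpow (sub_ne_zero.2 hβ.ne')]
  have h1β : 0 < 1 - β := by linarith
  have hn1 : (1 : ℝ) ≤ n := by exact_mod_cast hn
  have hpow : 1 ≤ (n : ℝ) ^ (1 - β) := Real.one_le_rpow hn1 h1β.le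
  rcases le_or_gt β 0 with hβ0 | hβ0
  · calc ∑ m ∈ Icc 1 n, (m : ℝ) ^ (-β) ≤ ∑ _m ∈ Icc 1 n, (n : ℝ) ^ (-β) :=
          sum_le_sum fun m hm => Real.rpow_le_rpow (by positivity)
            (by exact_mod_cast (mem_Icc.1 hm).2) (by linarith)
      _ = (n : ℝ) ^ (1 - β) := by
          rw [sum_const, Nat.card_Icc, add_tsub_cancel_right, nsmul_eq_mul, sub_eq_add_neg,
            Real.rpow_add (by positivity), Real.rpow_one]
      _ ≤ _ := le_mul_of_one_le_left (by positivity)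
          (by simp only [le_add_iff_nonneg_right]; positivity)
  · rw [Icc_eq_cons_Ioc hn, sum_cons, Nat.cast_one, Real.one_rpow]
    have := sum_Ioc_rpow_neg_le hβ0.le hβ.ne le_rfl hn
    rw [Nat.cast_one, Real.one_rpow] at this
    have : ((n : ℝ) ^ (1 - β) - 1) / (1 - β) ≤ (n : ℝ) ^ (1 - β) / (1 - β) := by
      gcongr; linarith
    linarith [show (1 + 1 / (1 - β)) * (n : ℝ) ^ (1 - β) =
      (n : ℝ) ^ (1 - β) + (n : ℝ) ^ (1 - β) / (1 - β) by ring]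

lemma sum_Icc_rpow_neg_one_sub_le {δ : ℝ} (hδ : 0 < δ) {m : ℕ} (hm : 1 ≤ m) (N : ℕ) :
    ∑ n ∈ Icc m N, (n : ℝ) ^ (-(1 + δ)) ≤ (1 + 1 / δ) * (m : ℝ) ^ (-δ) := by
  have hm1 : (1 : ℝ) ≤ m := by exact_mod_cast hm
  rcases lt_or_ge N m with hNm | hmN
  · rw [Icc_eq_empty (by omega), sum_empty]
    positivity
  rw [Icc_eq_cons_Ioc hmN, sum_cons]
  have htail := sum_Ioc_rpow_neg_le (s := 1 + δ) (by linarith) (by linarith) hm hmN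
  rw [sub_add_cancel_left] at htail
  have hhead : (m : ℝ) ^ (-(1 + δ)) ≤ (m : ℝ) ^ (-δ) :=
    Real.rpow_le_rpow_of_exponent_le hm1 (by linarith)
  have hN : 0 ≤ (N : ℝ) ^ (-δ) := by positivity
  have : ((N : ℝ) ^ (-δ) - (m : ℝ) ^ (-δ)) / -δ ≤ (m : ℝ) ^ (-δ) / δ := by
    rw [div_neg, ← neg_div, neg_sub]
    gcongr
    linarith
  linarith [show (1 + 1 / δ) * (m : ℝ) ^ (-δ) = (m : ℝ) ^ (-δ) + (m : ℝ) ^ (-δ) / δ by ring]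

namespace ENNReal

lemma natCast_rpow_eq_ofReal {n : ℕ} (hn : n ≠ 0) (r : ℝ) :
    (n : ℝ≥0∞) ^ r = ENNReal.ofReal ((n : ℝ) ^ r) := by
  rw [← ENNReal.ofReal_rpow_of_pos (by positivity), ENNReal.ofReal_natCast]

lemma sum_natCast_rpow_eq_ofReal {s : Finset ℕ} (hs : ∀ n ∈ s, n ≠ 0) (r : ℝ) :
    ∑ n ∈ s, (n : ℝ≥0∞) ^ r = ENNReal.ofReal (∑ n ∈ s, (n : ℝ) ^ r) := by
  rw [ENNReal.ofReal_sum_of_nonneg fun n _ => by positivity]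
  exact sum_congr rfl fun n hn => natCast_rpow_eq_ofReal (hs n hn) r

lemma sum_Icc_one_rpow_neg_le {β : ℝ} (hβ : β < 1) (n : ℕ) :
    ∑ m ∈ Icc 1 n, (m : ℝ≥0∞) ^ (-β) ≤ ENNReal.ofReal (1 + 1 / (1 - β)) * (n : ℝ≥0∞) ^ (1 - β) := by
  rcases eq_or_ne n 0 with rfl | hn
  · simp
  rw [sum_natCast_rpow_eq_ofReal (fun m hm => (Nat.one_le_iff_ne_zero.1 (mem_Icc.1 hm).1)),
    natCast_rpow_eq_ofReal hn, ← ENNReal.ofReal_mul (by have := sub_pos.2 hβ; positivity)]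
  exact ENNReal.ofReal_le_ofReal (_root_.sum_Icc_one_rpow_neg_le hβ n)

lemma sum_Ico_rpow_neg_one_sub_le {δ : ℝ} (hδ : 0 < δ) {m : ℕ} (hm : m ≠ 0) (N : ℕ) :
    ∑ n ∈ Ico m N, (n : ℝ≥0∞) ^ (-(1 + δ)) ≤ ENNReal.ofReal (1 + 1 / δ) * (m : ℝ≥0∞) ^ (-δ) := by
  calc ∑ n ∈ Ico m N, (n : ℝ≥0∞) ^ (-(1 + δ)) ≤ ∑ n ∈ Icc m N, (n : ℝ≥0∞) ^ (-(1 + δ)) :=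
        sum_le_sum_of_subset Ico_subset_Icc_self
    _ ≤ _ := by
        rw [sum_natCast_rpow_eq_ofReal (fun n hn => by have := (mem_Icc.1 hn).1; omega),
          natCast_rpow_eq_ofReal hm, ← ENNReal.ofReal_mul (by positivity)]
        exact ENNReal.ofReal_le_ofReal
          (sum_Icc_rpow_neg_one_sub_le hδ (Nat.one_le_iff_ne_zero.2 hm) N)

lemma tsum_rpow_neg_mul_sum_Icc_le {δ : ℝ} (hδ : 0 < δ) (c : ℕ → ℝ≥0∞) :
    ∑' n : ℕ, (n : ℝ≥0∞) ^ (-(1 + δ)) * ∑ m ∈ Icc 1 n, c m ≤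
      ENNReal.ofReal (1 + 1 / δ) * ∑' m : ℕ, (m : ℝ≥0∞) ^ (-δ) * c m := by
  refine ENNReal.tsum_le_of_sum_range_le fun N => ?_
  calc ∑ n ∈ range N, (n : ℝ≥0∞) ^ (-(1 + δ)) * ∑ m ∈ Icc 1 n, c m
      = ∑ m ∈ Ico 1 N, c m * ∑ n ∈ Ico m N, (n : ℝ≥0∞) ^ (-(1 + δ)) := by
        simp_rw [mul_sum]
        rw [sum_comm' (t' := Ico 1 N) (s' := fun m => Ico m N) fun n m => by
          simp only [mem_range, mem_Icc, mem_Ico]; omega]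
        simp_rw [mul_comm]
    _ ≤ ∑ m ∈ Ico 1 N, c m * (ENNReal.ofReal (1 + 1 / δ) * (m : ℝ≥0∞) ^ (-δ)) := by
        gcongr with m hm
        exact sum_Ico_rpow_neg_one_sub_le hδ (by have := (mem_Ico.1 hm).1; omega) N
    _ = ENNReal.ofReal (1 + 1 / δ) * ∑ m ∈ Ico 1 N, (m : ℝ≥0∞) ^ (-δ) * c m := by
        rw [mul_sum]
        exact sum_congr rfl fun _ _ => by ring
    _ ≤ _ := by gcongr; exact ENNReal.sum_le_tsum _

-- `0 ^ (-r) = ⊤` in `ℝ≥0∞`, but there it only multiplies `0 ^ r = 0`.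
lemma rpow_neg_mul_rpow_mul_le (x y : ℝ≥0∞) {r : ℝ} (hr : 0 < r) : x ^ (-r) * (x ^ r * y) ≤ y := by
  rcases eq_or_ne x 0 with rfl | hx0
  · simp [ENNReal.zero_rpow_of_pos hr]
  rcases eq_or_ne x ⊤ with rfl | hxt
  · simp [ENNReal.top_rpow_of_neg (neg_neg_of_pos hr)]
  rw [← mul_assoc, ← ENNReal.rpow_add _ _ hx0 hxt, neg_add_cancel, ENNReal.rpow_zero, one_mul]

end ENNReal

noncomputable def eGeneralizedCesaro (α : ℝ) (b : ℕ → ℝ≥0∞) (n : ℕ) : ℝ≥0∞ :=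
  (n : ℝ≥0∞) ^ (α - 1) * ∑ m ∈ Icc 1 n, b m * (m : ℝ≥0∞) ^ (-α)

lemma eGeneralizedCesaro_rpow_le {p q α ε : ℝ} (hpq : p.HolderConjugate q) (hβ : (α + ε) * q < 1)
    (b : ℕ → ℝ≥0∞) (n : ℕ) :
    eGeneralizedCesaro α b n ^ p ≤ ENNReal.ofReal (1 + 1 / (1 - (α + ε) * q)) ^ (p - 1) *
      ((n : ℝ≥0∞) ^ (-(1 + ε * p)) * ∑ m ∈ Icc 1 n, (m : ℝ≥0∞) ^ (ε * p) * b m ^ p) := by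
  set β := (α + ε) * q
  set C := ENNReal.ofReal (1 + 1 / (1 - β))
  set A := ∑ m ∈ Icc 1 n, (m : ℝ≥0∞) ^ (ε * p) * b m ^ p
  rcases eq_or_ne n 0 with rfl | hn
  · simp [eGeneralizedCesaro, ENNReal.zero_rpow_of_pos hpq.pos]
  have hHolder : ∑ m ∈ Icc 1 n, b m * (m : ℝ≥0∞) ^ (-α) ≤
      A ^ (1 / p) * (C * (n : ℝ≥0∞) ^ (1 - β)) ^ (1 / q) := by
    calc ∑ m ∈ Icc 1 n, b m * (m : ℝ≥0∞) ^ (-α)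
        = ∑ m ∈ Icc 1 n, ((m : ℝ≥0∞) ^ ε * b m) * (m : ℝ≥0∞) ^ (-(α + ε)) :=
          sum_congr rfl fun m hm => by
            have hm0 : (m : ℝ≥0∞) ≠ 0 := by
              have := (mem_Icc.1 hm).1; exact_mod_cast (by omega : m ≠ 0)
            rw [mul_comm _ (b m), mul_assoc, ← ENNReal.rpow_add _ _ hm0 (ENNReal.natCast_ne_top m)]
            ring_nf
      _ ≤ (∑ m ∈ Icc 1 n, ((m : ℝ≥0∞) ^ ε * b m) ^ p) ^ (1 / p) *
            (∑ m ∈ Icc 1 n, ((m : ℝ≥0∞) ^ (-(α + ε))) ^ q) ^ (1 / q) :=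
          ENNReal.inner_le_Lp_mul_Lq _ _ _ hpq
      _ = A ^ (1 / p) * (∑ m ∈ Icc 1 n, (m : ℝ≥0∞) ^ (-β)) ^ (1 / q) := by
          simp_rw [ENNReal.mul_rpow_of_nonneg _ _ hpq.nonneg, ← ENNReal.rpow_mul, neg_mul]
          rfl
      _ ≤ _ := mul_le_mul_right (ENNReal.rpow_le_rpow (ENNReal.sum_Icc_one_rpow_neg_le hβ n)
          (one_div_nonneg.2 hpq.symm.nonneg)) _
  have hn0 : (n : ℝ≥0∞) ≠ 0 := by exact_mod_cast hn
  have hexp : (α - 1) * p + (1 - β) * (p - 1) = -(1 + ε * p) := by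
    linear_combination (-(α + ε)) * hpq.sub_one_mul_conj
  have hqp : 1 / q * p = p - 1 := by
    rw [div_mul_eq_mul_div, one_mul, div_eq_iff hpq.symm.ne_zero]
    linear_combination -hpq.sub_one_mul_conj
  calc eGeneralizedCesaro α b n ^ p
      ≤ ((n : ℝ≥0∞) ^ (α - 1) * (A ^ (1 / p) * (C * (n : ℝ≥0∞) ^ (1 - β)) ^ (1 / q))) ^ p := by
        unfold eGeneralizedCesaro; gcongr; exact hpq.nonneg
    _ = C ^ (p - 1) * ((n : ℝ≥0∞) ^ ((α - 1) * p + (1 - β) * (p - 1)) * A) := by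
        simp only [ENNReal.mul_rpow_of_nonneg _ _ hpq.nonneg, ← ENNReal.rpow_mul, hqp,
          one_div_mul_cancel hpq.ne_zero, ENNReal.rpow_one,
          ENNReal.mul_rpow_of_nonneg _ _ (by linarith [hpq.lt] : (0:ℝ) ≤ p - 1),
          ENNReal.rpow_add _ _ hn0 (ENNReal.natCast_ne_top n)]
        ring
    _ = _ := by rw [hexp]

theorem tsum_eGeneralizedCesaro_rpow_le {p α : ℝ} (hp : 1 < p) (hα : α < 1 - 1 / p) :
    ∃ K : ℝ≥0∞, K ≠ ⊤ ∧ ∀ b : ℕ → ℝ≥0∞,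
      ∑' n, eGeneralizedCesaro α b n ^ p ≤ K * ∑' m, b m ^ p := by
  set q := p.conjExponent
  have hpq : p.HolderConjugate q := .conjExponent hp
  obtain ⟨ε, hε, hαε⟩ : ∃ ε, 0 < ε ∧ α + ε < 1 - 1 / p :=
    ⟨(1 - 1 / p - α) / 2, by linarith, by linarith⟩
  have hεp : 0 < ε * p := mul_pos hε hpq.pos
  have hβ : (α + ε) * q < 1 := by
    rw [← lt_div_iff₀ hpq.symm.pos]
    linarith [hpq.inv_add_inv_eq_one, one_div p, one_div q]
  set C₁ := ENNReal.ofReal (1 + 1 / (1 - (α + ε) * q)) ^ (p - 1)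
  set C₂ := ENNReal.ofReal (1 + 1 / (ε * p))
  refine ⟨C₁ * C₂, by finiteness, fun b => ?_⟩
  calc ∑' n, eGeneralizedCesaro α b n ^ p
      ≤ ∑' n : ℕ, C₁ * ((n : ℝ≥0∞) ^ (-(1 + ε * p)) *
          ∑ m ∈ Icc 1 n, (m : ℝ≥0∞) ^ (ε * p) * b m ^ p) :=
        ENNReal.tsum_le_tsum (eGeneralizedCesaro_rpow_le hpq hβ b)
    _ ≤ C₁ * (C₂ * ∑' m : ℕ, (m : ℝ≥0∞) ^ (-(ε * p)) * ((m : ℝ≥0∞) ^ (ε * p) * b m ^ p)) := by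
        rw [ENNReal.tsum_mul_left]
        gcongr
        exact ENNReal.tsum_rpow_neg_mul_sum_Icc_le hεp _
    _ ≤ C₁ * (C₂ * ∑' m, b m ^ p) := by
        gcongr with m
        exact ENNReal.rpow_neg_mul_rpow_mul_le _ _ hεp
    _ = C₁ * C₂ * ∑' m, b m ^ p := (mul_assoc _ _ _).symm

lemma enorm_natCast_cpow_inv {n : ℕ} (hn : n ≠ 0) (s : ℂ) :
    ‖((n : ℂ) ^ s)⁻¹‖ₑ = (n : ℝ≥0∞) ^ (-s.re) := by
  rw [enorm_inv (by simp [hn]), ← ofReal_norm,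
    Complex.norm_natCast_cpow_of_pos (Nat.pos_of_ne_zero hn),
    ← ENNReal.natCast_rpow_eq_ofReal hn, ENNReal.rpow_neg]

noncomputable def generalizedCesaro (α : ℝ) (x : ℕ → ℂ) (n : ℕ) : ℂ :=
  1 / (n : ℂ) ^ ((1 : ℂ) - α) * ∑ m ∈ Icc 1 n, x m / (m : ℂ) ^ (α : ℂ)

lemma enorm_generalizedCesaro_le (α : ℝ) (x : ℕ → ℂ) (n : ℕ) :
    ‖generalizedCesaro α x n‖ₑ ≤ eGeneralizedCesaro α (fun m => ‖x m‖ₑ) n := by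
  rcases eq_or_ne n 0 with rfl | hn
  · simp [generalizedCesaro]
  rw [generalizedCesaro, eGeneralizedCesaro, enorm_mul, one_div, enorm_natCast_cpow_inv hn]
  simp only [Complex.sub_re, Complex.one_re, Complex.ofReal_re, neg_sub]
  gcongr
  refine (enorm_sum_le _ _).trans (sum_le_sum fun m hm => ?_)
  rw [div_eq_mul_inv, enorm_mul, enorm_natCast_cpow_inv (by have := (mem_Icc.1 hm).1; omega),
    Complex.ofReal_re]

lemma summable_and_tsum_le_of_tsum_ofReal_le {a b : ℕ → ℝ} (ha : ∀ n, 0 ≤ a n)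
    (hb : ∀ n, 0 ≤ b n) (hbs : Summable b) {K : ℝ≥0∞} (hK : K ≠ ⊤)
    (h : ∑' n, ENNReal.ofReal (a n) ≤ K * ∑' n, ENNReal.ofReal (b n)) :
    Summable a ∧ ∑' n, a n ≤ K.toReal * ∑' n, b n := by
  rw [← ENNReal.ofReal_tsum_of_nonneg hb hbs, ← ENNReal.ofReal_toReal hK,
    ← ENNReal.ofReal_mul ENNReal.toReal_nonneg] at h
  have has : Summable a := by
    simpa [ENNReal.toReal_ofReal (ha _)] using
      ENNReal.summable_toReal (ne_top_of_le_ne_top ENNReal.ofReal_ne_top h)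
  refine ⟨has, ?_⟩
  rwa [← ENNReal.ofReal_tsum_of_nonneg ha has,
    ENNReal.ofReal_le_ofReal_iff (mul_nonneg ENNReal.toReal_nonneg (tsum_nonneg hb))] at h

/-- For `1 < p < ∞` and `α < 1/p'` (i.e. `α < 1 - 1/p`), the operator
`(G x)_n = (1/n^{1-α}) ∑_{m=1}^n x_m/m^α` is bounded from `ℓ^p` to `ℓ^p`. -/
theorem generalized_cesaro_bounded_lp (p α : ℝ) (hp : 1 < p) (hα : α < 1 - 1 / p) :
    ∃ K : ℝ, 0 < K ∧ ∀ x : ℕ → ℂ,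
      Summable (fun m : ℕ => ‖x m‖ ^ p) →
      Summable (fun n : ℕ =>
        ‖(1 / (n : ℂ) ^ ((1 : ℂ) - α)) *
          ∑ m ∈ Finset.Icc 1 n, x m / (m : ℂ) ^ (α : ℂ)‖ ^ p) ∧
      (∑' n : ℕ,
        ‖(1 / (n : ℂ) ^ ((1 : ℂ) - α)) *
          ∑ m ∈ Finset.Icc 1 n, x m / (m : ℂ) ^ (α : ℂ)‖ ^ p) ^ (1 / p) ≤
        K * (∑' m : ℕ, ‖x m‖ ^ p) ^ (1 / p) := by
  obtain ⟨K, hK, hHardy⟩ := tsum_eGeneralizedCesaro_rpow_le hp hα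
  have hp0 : 0 < p := by linarith
  refine ⟨(K.toReal + 1) ^ (1 / p), by positivity, fun x hx => ?_⟩
  have hofReal (z : ℂ) : ENNReal.ofReal (‖z‖ ^ p) = ‖z‖ₑ ^ p := by
    rw [← ENNReal.ofReal_rpow_of_nonneg (norm_nonneg z) hp0.le, ofReal_norm]
  obtain ⟨hsum, hle⟩ := summable_and_tsum_le_of_tsum_ofReal_le
    (a := fun n => ‖generalizedCesaro α x n‖ ^ p) (fun n => by positivity)
    (fun m => by positivity) hx hK <| by
      simp only [hofReal]
      exact (ENNReal.tsum_le_tsum fun n =>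
        ENNReal.rpow_le_rpow (enorm_generalizedCesaro_le α x n) hp0.le).trans (hHardy _)
  have hx0 : 0 ≤ ∑' m, ‖x m‖ ^ p := tsum_nonneg fun m => by positivity
  refine ⟨hsum, ?_⟩
  calc _ ≤ ((K.toReal + 1) * ∑' m, ‖x m‖ ^ p) ^ (1 / p) := by
        gcongr
        exact hle.trans (by gcongr; linarith)
    _ = _ := Real.mul_rpow (by positivity) hx0
end

section
/- Let λ ∈ ℂ with λ ∉ {0} ∪ {1/n : n ∈ ℕ} and suppose α := Re(1/λ) < 1. Then there exists a constant β(λ) > 0 such that for all positive integers m < n, |1/(n ∏_{k=m}^n (1 - 1/(kλ)))| ≤ β(λ)/(n^{1-α} m^α). -/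
/-!
With `w = 1 / λ`, `‖1 - w / k‖ ≥ re (1 - w / k) = 1 - α / k > 0`, so it suffices to bound the
real product `∏_{k=m}^n (1 - α / k)` from below. Taking logarithms,
`log (1 - α / k) + α log (1 + 1 / k) ≥ -C / k²` with `C = α² / min 1 (1 - α) + |α|`, because
`1 - α / k ≥ min 1 (1 - α)`; the second terms telescope to
`α log ((n + 1) / m)` and `∑ 1 / k² ≤ 2`, whence `∏_{k=m}^n (1 - α / k) ≥ e^{-2C} (m / (n + 1))^α`.
-/

open Real Finset

lemma min_one_one_sub_le_one_sub_mul {α x : ℝ} (hx0 : 0 ≤ x) (hx1 : x ≤ 1) :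
    min 1 (1 - α) ≤ 1 - α * x := by
  -- `1 - α x = (1 - x) * 1 + x * (1 - α)`
  have h1 := min_le_left 1 (1 - α)
  have h2 := min_le_right 1 (1 - α)
  nlinarith [mul_nonneg (sub_nonneg.2 hx1) (sub_nonneg.2 h1), mul_nonneg hx0 (sub_nonneg.2 h2)]

lemma neg_mul_sq_le_log_one_sub_mul_add_mul_log_one_add {α x : ℝ} (hα : α < 1) (hx0 : 0 ≤ x)
    (hx1 : x ≤ 1) :
    -(α ^ 2 / min 1 (1 - α) + |α|) * x ^ 2 ≤ log (1 - α * x) + α * log (1 + x) := by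
  set d := min 1 (1 - α)
  have hd : 0 < d := lt_min one_pos (sub_pos.2 hα)
  have hdy : d ≤ 1 - α * x := min_one_one_sub_le_one_sub_mul hx0 hx1
  have hy : 0 < 1 - α * x := hd.trans_le hdy
  have hlog_sub : -(α ^ 2 * x ^ 2 / (1 - α * x)) - α * x ≤ log (1 - α * x) := by
    convert one_sub_inv_le_log_of_pos hy using 1
    field_simp
    ring
  have hlog_add : α * x - |α| * x ^ 2 ≤ α * log (1 + x) := by
    have hup : log (1 + x) ≤ x := by linarith [log_le_sub_one_of_pos (by linarith : 0 < 1 + x)]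
    have hlow : x - x ^ 2 ≤ log (1 + x) := by
      refine le_trans ?_ (le_log_one_add_of_nonneg hx0)
      rw [le_div_iff₀ (by linarith)]
      nlinarith [pow_nonneg hx0 3]
    rcases le_total 0 α with h | h
    · rw [abs_of_nonneg h]; nlinarith
    · rw [abs_of_nonpos h]; nlinarith
  have hfrac : α ^ 2 * x ^ 2 / (1 - α * x) ≤ α ^ 2 * x ^ 2 / d := by gcongr
  have hsplit : -(α ^ 2 / d + |α|) * x ^ 2 = -(α ^ 2 * x ^ 2 / d) - |α| * x ^ 2 := by ring
  linarith

lemma one_sub_div_natCast_pos {α : ℝ} (hα : α < 1) (k : ℕ) : 0 < 1 - α / k := by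
  rcases Nat.eq_zero_or_pos k with rfl | hk
  · simp
  · have : α / k < 1 := (div_lt_one (by exact_mod_cast hk)).2 (hα.trans_le (by exact_mod_cast hk))
    linarith

lemma neg_mul_inv_sq_le_log_one_sub_div_add {α : ℝ} (hα : α < 1) {k : ℕ} (hk : 1 ≤ k) :
    -(α ^ 2 / min 1 (1 - α) + |α|) * ((k : ℝ) ^ 2)⁻¹ ≤
      log (1 - α / k) + α * (log (k + 1 : ℝ) - log k) := by
  have hk0 : (0 : ℝ) < k := by exact_mod_cast hk
  have hlog : log (k + 1 : ℝ) - log k = log (1 + (k : ℝ)⁻¹) := by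
    rw [← log_div (by positivity) hk0.ne']
    congr 1
    field_simp
  rw [div_eq_mul_inv α, hlog, ← inv_pow]
  exact neg_mul_sq_le_log_one_sub_mul_add_mul_log_one_add hα (inv_nonneg.2 hk0.le)
    (inv_le_one_of_one_le₀ (by exact_mod_cast hk))

lemma exists_pos_mul_rpow_le_prod_one_sub_div {α : ℝ} (hα : α < 1) :
    ∃ c > 0, ∀ m n : ℕ, 1 ≤ m → m ≤ n →
      c * ((m : ℝ) / (n + 1)) ^ α ≤ ∏ k ∈ Icc m n, (1 - α / k) := by
  set C := α ^ 2 / min 1 (1 - α) + |α|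
  have hC : 0 ≤ C := add_nonneg (div_nonneg (sq_nonneg α) (lt_min one_pos (sub_pos.2 hα)).le)
    (abs_nonneg α)
  refine ⟨exp (-2 * C), exp_pos _, fun m n hm hmn => ?_⟩
  have hm0 : (0 : ℝ) < m := by exact_mod_cast hm
  have hpos : ∀ k ∈ Icc m n, 0 < 1 - α / k := fun k _ => one_sub_div_natCast_pos hα k
  have hsq : ∑ k ∈ Icc m n, ((k : ℝ) ^ 2)⁻¹ ≤ 2 := by
    have hsub : Icc m n ⊆ Ioo 0 (n + 1) := fun k hk => by
      simp only [mem_Icc, mem_Ioo] at hk ⊢; omega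
    calc ∑ k ∈ Icc m n, ((k : ℝ) ^ 2)⁻¹ ≤ ∑ k ∈ Ioo 0 (n + 1), ((k : ℝ) ^ 2)⁻¹ :=
          sum_le_sum_of_subset_of_nonneg hsub fun _ _ _ => by positivity
      _ ≤ 2 := by simpa using sum_Ioo_inv_sq_le (α := ℝ) 0 (n + 1)
  have htel : ∑ k ∈ Icc m n, (log (k + 1 : ℝ) - log k) = log (n + 1 : ℝ) - log m := by
    have := sum_Icc_sub (f := fun k : ℕ => log (k : ℝ)) hmn
    push_cast at this
    exact this
  have hlog : -2 * C + α * (log m - log (n + 1 : ℝ)) ≤ ∑ k ∈ Icc m n, log (1 - α / k) := by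
    have h := sum_le_sum fun k (hk : k ∈ Icc m n) =>
      neg_mul_inv_sq_le_log_one_sub_div_add hα (hm.trans (mem_Icc.1 hk).1)
    rw [sum_add_distrib, ← mul_sum, ← mul_sum, htel] at h
    nlinarith
  rw [← exp_log (prod_pos hpos), log_prod fun k hk => (hpos k hk).ne',
    rpow_def_of_pos (by positivity), ← exp_add, exp_le_exp, log_div hm0.ne' (by positivity)]
  linarith

lemma re_one_sub_one_div_natCast_mul (lam : ℂ) (k : ℕ) :
    (1 - 1 / (k * lam)).re = 1 - (1 / lam).re / k := by
  rw [div_mul_eq_div_div_swap, Complex.sub_re, Complex.one_re, Complex.div_natCast_re]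

lemma prod_one_sub_re_div_le_norm_prod (lam : ℂ) (h : (1 / lam).re < 1) (s : Finset ℕ) :
    ∏ k ∈ s, (1 - (1 / lam).re / k) ≤ ‖∏ k ∈ s, (1 - 1 / (k * lam))‖ := by
  rw [norm_prod]
  refine prod_le_prod (fun k _ => (one_sub_div_natCast_pos h k).le) fun k _ => ?_
  rw [← re_one_sub_one_div_natCast_mul]
  exact Complex.re_le_norm _

lemma div_rpow_le_two_rpow_abs_mul_div_add_one_rpow (α : ℝ) (m : ℕ) {n : ℕ} (hn : 1 ≤ n) :
    ((m : ℝ) / n) ^ α ≤ 2 ^ |α| * ((m : ℝ) / (n + 1)) ^ α := by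
  have hn0 : (0 : ℝ) < n := by exact_mod_cast hn
  have hn1 : (1 : ℝ) ≤ n := by exact_mod_cast hn
  have hratio : ((n + 1 : ℝ) / n) ^ α ≤ 2 ^ |α| :=
    calc ((n + 1 : ℝ) / n) ^ α ≤ ((n + 1 : ℝ) / n) ^ |α| :=
          rpow_le_rpow_of_exponent_le ((one_le_div hn0).2 (by linarith)) (le_abs_self α)
      _ ≤ 2 ^ |α| :=
          rpow_le_rpow (by positivity) ((div_le_iff₀ hn0).2 (by linarith)) (abs_nonneg α)
  have hsplit : (m : ℝ) / n = (m / (n + 1)) * ((n + 1) / n) := by field_simp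
  rw [hsplit, mul_rpow (by positivity) (by positivity), mul_comm]
  gcongr

theorem entry_bound_of_re_lt_one_general (lam : ℂ)
    (α : ℝ) (hα : α = (1 / lam).re) (hα1 : α < 1) :
    ∃ β : ℝ, 0 < β ∧ ∀ m n : ℕ, 1 ≤ m → m < n →
      ‖(1 / (n * ∏ k ∈ Finset.Icc m n, (1 - 1 / (k * lam))) : ℂ)‖ ≤
        β / ((n : ℝ) ^ (1 - α) * (m : ℝ) ^ α) := by
  obtain ⟨c, hc, hprod⟩ := exists_pos_mul_rpow_le_prod_one_sub_div hα1
  refine ⟨2 ^ |α| / c, by positivity, fun m n hm hmn => ?_⟩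
  have hn : 1 ≤ n := hm.trans hmn.le
  have hm0 : (0 : ℝ) < m := by exact_mod_cast hm
  have hn0 : (0 : ℝ) < n := by exact_mod_cast hn
  have hP : c * ((m : ℝ) / (n + 1)) ^ α ≤ ‖∏ k ∈ Icc m n, (1 - 1 / (k * lam))‖ := by
    subst hα
    exact (hprod m n hm hmn.le).trans (prod_one_sub_re_div_le_norm_prod lam hα1 _)
  have hden : (n : ℝ) ^ (1 - α) * m ^ α = n * (m / n) ^ α := by
    rw [rpow_sub hn0, rpow_one, div_rpow hm0.le hn0.le]
    ring
  have hratio := div_rpow_le_two_rpow_abs_mul_div_add_one_rpow α m hn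
  rw [norm_div, norm_one, norm_mul, Complex.norm_natCast, hden]
  calc 1 / (n * ‖∏ k ∈ Icc m n, (1 - 1 / (k * lam))‖)
      ≤ 1 / (n * (c * ((m : ℝ) / (n + 1)) ^ α)) :=
        one_div_le_one_div_of_le (by positivity) (by gcongr)
    _ ≤ 2 ^ |α| / c / (n * (m / n) ^ α) := by
        rw [div_le_div_iff₀ (by positivity) (by positivity), div_mul_eq_mul_div,
          le_div_iff₀ hc]
        nlinarith [mul_le_mul_of_nonneg_left hratio (mul_nonneg hc.le hn0.le)]

/-- Let `λ ∉ {0} ∪ {1/n : n ≥ 1}` with `α := Re(1/λ) < 1`. Then there is `β > 0` such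
that for all positive integers `m < n`,
`|1/(n ∏_{k=m}^n (1 - 1/(kλ)))| ≤ β/(n^{1-α} m^α)`. -/
theorem entry_bound_of_re_lt_one (lam : ℂ) (hlam0 : lam ≠ 0)
    (hlam : ∀ k : ℕ, 1 ≤ k → lam ≠ 1 / (k : ℂ))
    (α : ℝ) (hα : α = (1 / lam).re) (hα1 : α < 1) :
    ∃ β : ℝ, 0 < β ∧ ∀ m n : ℕ, 1 ≤ m → m < n →
      ‖(1 / (n * ∏ k ∈ Finset.Icc m n, (1 - 1 / (k * lam))) : ℂ)‖ ≤
        β / ((n : ℝ) ^ (1 - α) * (m : ℝ) ^ α) :=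
  entry_bound_of_re_lt_one_general lam α hα hα1
end

section
/- The n-th row entries of the inverse (C - λI)^{-1} on ℂ^ℕ satisfy the recursive/product formula: for λ ∉ {0} ∪ {1/k : k ∈ ℕ}, the lower triangular matrix R with R_{nn} = 1/(1/n - λ), R_{nm} = -1/(n λ² ∏_{k=m}^n (1 - 1/(kλ))) for 1 ≤ m < n, and R_{nm} = 0 for m > n, satisfies (C - λI) ∘ T_R = Id = T_R ∘ (C - λI) as operators on ℂ^ℕ. -/
/-!
Write `P(m,n) = ∏_{k=m+1}^{n+1} (1 - 1/(kλ))`, so that `R n n = -1/(λ P(n,n))` and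
`R n m = -1/((n+1) λ² P(m,n))` for `m < n`. Since `P` gains one factor `1 - 1/(kλ)` at either
end, and `1/(P(1 - 1/c)) - 1/P = 1/(c P(1 - 1/c))`, the reciprocals `1/P` telescope: the column
sums `∑_{k=m}^n R k m` equal `-1/(λ P(m,n))`, and the row sums `∑_{k=m}^n R n k/(k+1)` equal
`-1/((n+1) λ P(m,n))`. After swapping the triangular double sums, the coefficient of `x m` in
row `n` of either composite `(C - λ) T_R` or `T_R (C - λ)` is therefore the same number
`-1/((n+1) λ P(m,n)) - λ R n m`, which is `1` for `m = n` and `0` for `m < n`.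
-/

open Finset

theorem inv_sub_inv_eq_of_eq_mul_one_sub {K : Type*} [Field K] {p q c : K}
    (h : q = p * (1 - c⁻¹)) (hq : q ≠ 0) : q⁻¹ - p⁻¹ = (c * q)⁻¹ := by
  have hp : p ≠ 0 := left_ne_zero_of_mul (h ▸ hq)
  rw [inv_sub_inv hq hp, show p - q = p * c⁻¹ by rw [h]; ring, mul_inv]
  field_simp

theorem sum_range_mul_eq_of_forall_eq_ite {M : Type*} [Semiring M] {n : ℕ} {c x : ℕ → M}
    (hc : ∀ m ≤ n, c m = if m = n then 1 else 0) : ∑ m ∈ range (n + 1), c m * x m = x n := by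
  rw [sum_congr rfl fun m hm => by rw [hc m (Nat.lt_succ_iff.mp (mem_range.mp hm))]]
  simp

theorem sum_range_sum_range_eq_sum_range_sum_Icc {M : Type*} [AddCommMonoid M] (n : ℕ)
    (f : ℕ → ℕ → M) :
    ∑ k ∈ range (n + 1), ∑ m ∈ range (k + 1), f k m = ∑ m ∈ range (n + 1), ∑ k ∈ Icc m n, f k m :=
  sum_comm' fun k m => by simp only [mem_range, mem_Icc]; omega

section Composition

variable {K : Type*} [Field K] (lam : K) (R : ℕ → ℕ → K) (x : ℕ → K) (n : ℕ)

theorem cesaro_sub_comp_lower_apply :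
    1 / ((n : K) + 1) * ∑ k ∈ range (n + 1), ∑ m ∈ range (k + 1), R k m * x m
        - lam * ∑ m ∈ range (n + 1), R n m * x m
      = ∑ m ∈ range (n + 1), (((n : K) + 1)⁻¹ * ∑ k ∈ Icc m n, R k m - lam * R n m) * x m := by
  simp only [sum_range_sum_range_eq_sum_range_sum_Icc, mul_sum, ← sum_sub_distrib, sub_mul,
    sum_mul, one_div, mul_assoc]

theorem lower_comp_cesaro_sub_apply :
    ∑ m ∈ range (n + 1), R n m * (1 / ((m : K) + 1) * ∑ k ∈ range (m + 1), x k - lam * x m)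
      = ∑ k ∈ range (n + 1), (∑ m ∈ Icc k n, R n m / ((m : K) + 1) - lam * R n k) * x k := by
  have expand : ∀ m, R n m * (1 / ((m : K) + 1) * ∑ k ∈ range (m + 1), x k - lam * x m)
      = ∑ k ∈ range (m + 1), R n m / ((m : K) + 1) * x k - lam * R n m * x m := fun m => by
    rw [← mul_sum]; ring
  simp only [expand, sum_sub_distrib, sum_range_sum_range_eq_sum_range_sum_Icc, sum_mul,
    sub_mul]

end Composition

namespace CesaroResolvent

noncomputable def partialProd (lam : ℂ) (m n : ℕ) : ℂ :=
  ∏ k ∈ Icc (m + 1) (n + 1), (1 - 1 / ((k : ℂ) * lam))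

variable {lam : ℂ}

theorem partialProd_ne_zero (hlam : ∀ k : ℕ, (k : ℂ) * lam ≠ 1) (m n : ℕ) :
    partialProd lam m n ≠ 0 :=
  prod_ne_zero_iff.mpr fun k _ => by
    rw [sub_ne_zero, ne_comm, one_div, inv_ne_one]; exact hlam k

theorem partialProd_self (lam : ℂ) (n : ℕ) :
    partialProd lam n n = 1 - (((n : ℂ) + 1) * lam)⁻¹ := by
  simp [partialProd]

theorem partialProd_succ_right (lam : ℂ) {m n : ℕ} (h : m ≤ n + 1) :
    partialProd lam m (n + 1) = partialProd lam m n * (1 - (((n + 1 : ℕ) + 1 : ℂ) * lam)⁻¹) := by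
  rw [partialProd, prod_Icc_succ_top (by omega), ← partialProd]
  push_cast
  ring

theorem partialProd_eq_succ_left (lam : ℂ) {m n : ℕ} (h : m ≤ n) :
    partialProd lam m n = partialProd lam (m + 1) n * (1 - (((m : ℂ) + 1) * lam)⁻¹) := by
  rw [partialProd, Icc_eq_cons_Ioc (by omega), prod_cons, ← Icc_add_one_left_eq_Ioc, ← partialProd]
  push_cast
  ring

variable {R : ℕ → ℕ → ℂ}

theorem diag_eq_neg_inv (hlam0 : lam ≠ 0) (hRdiag : ∀ n : ℕ, R n n = 1 / (1 / ((n : ℂ) + 1) - lam))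
    (n : ℕ) : R n n = -(lam * partialProd lam n n)⁻¹ := by
  rw [hRdiag, partialProd_self, ← inv_neg, one_div, one_div]
  congr 1
  field_simp
  ring

theorem lower_eq_neg_inv (hRlow : ∀ m n : ℕ, m < n →
      R n m = -1 / (((n : ℂ) + 1) * lam ^ 2 *
        ∏ k ∈ Finset.Icc (m + 1) (n + 1), (1 - 1 / (k * lam))))
    {m n : ℕ} (h : m < n) : R n m = -(((n : ℂ) + 1) * lam ^ 2 * partialProd lam m n)⁻¹ := by
  rw [hRlow m n h, neg_div, one_div, partialProd]

section
variable (hlam : ∀ k : ℕ, (k : ℂ) * lam ≠ 1)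
  (hdiag : ∀ n, R n n = -(lam * partialProd lam n n)⁻¹)
  (hlow : ∀ {m n}, m < n → R n m = -(((n : ℂ) + 1) * lam ^ 2 * partialProd lam m n)⁻¹)
include hlam hdiag hlow

theorem sum_Icc_col {m n : ℕ} (h : m ≤ n) :
    ∑ k ∈ Icc m n, R k m = -(lam * partialProd lam m n)⁻¹ := by
  induction n, h using Nat.le_induction with
  | base => rw [Icc_self, sum_singleton, hdiag]
  | succ n hmn ih =>
    have key := inv_sub_inv_eq_of_eq_mul_one_sub (partialProd_succ_right lam (by omega))
      (partialProd_ne_zero hlam m (n + 1))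
    rw [sum_Icc_succ_top (by omega), ih, hlow (by omega)]
    generalize ((n + 1 : ℕ) : ℂ) + 1 = N at key ⊢
    linear_combination lam⁻¹ * key

theorem sum_Icc_row {m n : ℕ} (h : m ≤ n) :
    ∑ k ∈ Icc m n, R n k / ((k : ℂ) + 1) = -(((n : ℂ) + 1) * lam * partialProd lam m n)⁻¹ := by
  induction h using Nat.decreasingInduction with
  | self =>
    rw [Icc_self, sum_singleton, hdiag]
    generalize (n : ℂ) + 1 = N
    ring
  | of_succ m hmn ih =>
    have key := inv_sub_inv_eq_of_eq_mul_one_sub (partialProd_eq_succ_left lam hmn.le)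
      (partialProd_ne_zero hlam m n)
    rw [Icc_eq_cons_Ioc hmn.le, sum_cons, ← Icc_add_one_left_eq_Ioc, ih, hlow hmn]
    generalize (n : ℂ) + 1 = N at key ⊢
    generalize (m : ℂ) + 1 = M at key ⊢
    linear_combination (N * lam)⁻¹ * key

theorem coeff_eq_ite (hlam0 : lam ≠ 0) {m n : ℕ} (h : m ≤ n) :
    -(((n : ℂ) + 1) * lam * partialProd lam m n)⁻¹ - lam * R n m = if m = n then 1 else 0 := by
  have hP := partialProd_ne_zero hlam m n
  rcases h.eq_or_lt with rfl | hlt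
  · rw [if_pos rfl, hdiag]
    calc _ = (1 - (((m : ℂ) + 1) * lam)⁻¹) * (partialProd lam m m)⁻¹ := by
          generalize (m : ℂ) + 1 = N
          field_simp
          ring
      _ = 1 := by rw [← partialProd_self, mul_inv_cancel₀ hP]
  · rw [if_neg hlt.ne, hlow hlt]
    field_simp
    ring

theorem col_coeff_eq_ite (hlam0 : lam ≠ 0) {m n : ℕ} (h : m ≤ n) :
    ((n : ℂ) + 1)⁻¹ * ∑ k ∈ Icc m n, R k m - lam * R n m = if m = n then 1 else 0 := by
  rw [sum_Icc_col hlam hdiag hlow h, ← coeff_eq_ite hlam hdiag hlow hlam0 h]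
  generalize (n : ℂ) + 1 = N
  ring

theorem row_coeff_eq_ite (hlam0 : lam ≠ 0) {m n : ℕ} (h : m ≤ n) :
    ∑ k ∈ Icc m n, R n k / ((k : ℂ) + 1) - lam * R n m = if m = n then 1 else 0 := by
  rw [sum_Icc_row hlam hdiag hlow h, coeff_eq_ite hlam hdiag hlow hlam0 h]

end

end CesaroResolvent

open CesaroResolvent

theorem cesaro_resolvent_formula_general (lam : ℂ) (hlam0 : lam ≠ 0)
    (hlam : ∀ k : ℕ, 1 ≤ k → lam ≠ 1 / (k : ℂ))
    (Ces : (ℕ → ℂ) → (ℕ → ℂ))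
    (hCes : ∀ x : ℕ → ℂ, ∀ n : ℕ,
      Ces x n = (1 / ((n : ℂ) + 1)) * ∑ k ∈ Finset.range (n + 1), x k)
    (R : ℕ → ℕ → ℂ)
    (hRdiag : ∀ n : ℕ, R n n = 1 / (1 / ((n : ℂ) + 1) - lam))
    (hRlow : ∀ m n : ℕ, m < n →
      R n m = -1 / (((n : ℂ) + 1) * lam ^ 2 *
        ∏ k ∈ Finset.Icc (m + 1) (n + 1), (1 - 1 / (k * lam))))
    (TR : (ℕ → ℂ) → (ℕ → ℂ))
    (hTR : ∀ x : ℕ → ℂ, ∀ n : ℕ, TR x n = ∑ m ∈ Finset.range (n + 1), R n m * x m) :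
    (∀ x : ℕ → ℂ, Ces (TR x) - lam • TR x = x) ∧
    (∀ x : ℕ → ℂ, TR (Ces x - lam • x) = x) := by
  have hlam' : ∀ k : ℕ, (k : ℂ) * lam ≠ 1 := fun k hk => by
    rcases Nat.eq_zero_or_pos k with rfl | hk1
    · simp at hk
    · exact hlam k hk1 (eq_one_div_of_mul_eq_one_right hk)
  have hdiag := diag_eq_neg_inv hlam0 hRdiag
  have hlow := @lower_eq_neg_inv lam R hRlow
  refine ⟨fun x => funext fun n => ?_, fun x => funext fun n => ?_⟩
  · simp only [Pi.sub_apply, Pi.smul_apply, smul_eq_mul, hCes, hTR]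
    rw [cesaro_sub_comp_lower_apply]
    exact sum_range_mul_eq_of_forall_eq_ite fun m hm => col_coeff_eq_ite hlam' hdiag hlow hlam0 hm
  · simp only [Pi.sub_apply, Pi.smul_apply, smul_eq_mul, hCes, hTR]
    rw [lower_comp_cesaro_sub_apply]
    exact sum_range_mul_eq_of_forall_eq_ite fun m hm => row_coeff_eq_ite hlam' hdiag hlow hlam0 hm

/-- For `λ ∉ {0} ∪ {1/k : k ≥ 1}`, the lower triangular matrix `R` with diagonal entries
`R_{nn} = 1/(1/n - λ)`, entries `R_{nm} = -1/(n λ² ∏_{k=m}^n (1 - 1/(kλ)))` for `m < n`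
and `0` for `m > n` induces the two-sided inverse of `C - λI` on `ℂ^ℕ`, where `C` is the
Cesàro operator.  (Sequences are indexed by `ℕ = {0,1,2,...}`, with index `j`
corresponding to coordinate `j+1`.) -/
theorem cesaro_resolvent_formula (lam : ℂ) (hlam0 : lam ≠ 0)
    (hlam : ∀ k : ℕ, 1 ≤ k → lam ≠ 1 / (k : ℂ))
    (Ces : (ℕ → ℂ) → (ℕ → ℂ))
    (hCes : ∀ x : ℕ → ℂ, ∀ n : ℕ,
      Ces x n = (1 / ((n : ℂ) + 1)) * ∑ k ∈ Finset.range (n + 1), x k)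
    (R : ℕ → ℕ → ℂ)
    (hRdiag : ∀ n : ℕ, R n n = 1 / (1 / ((n : ℂ) + 1) - lam))
    (hRlow : ∀ m n : ℕ, m < n →
      R n m = -1 / (((n : ℂ) + 1) * lam ^ 2 *
        ∏ k ∈ Finset.Icc (m + 1) (n + 1), (1 - 1 / (k * lam))))
    (hRup : ∀ m n : ℕ, n < m → R n m = 0)
    (TR : (ℕ → ℂ) → (ℕ → ℂ))
    (hTR : ∀ x : ℕ → ℂ, ∀ n : ℕ, TR x n = ∑ m ∈ Finset.range (n + 1), R n m * x m) :
    (∀ x : ℕ → ℂ, Ces (TR x) - lam • TR x = x) ∧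
    (∀ x : ℕ → ℂ, TR (Ces x - lam • x) = x) :=
  cesaro_resolvent_formula_general lam hlam0 hlam Ces hCes R hRdiag hRlow TR hTR
end
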